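/- The graph Q obtained from the octahedron K_{2,2,2} by deleting the edges of one triangle satisfies: τ(Q) = 2, and Q contains none of K₄, K_{2,3}, or K₃ ∪ K₃ (disjoint union of two triangles) as a minor. -/

import Mathlib

open SimpleGraph

universe u v

section Defs

variable {V : Type u} {W : Type v}

/-- A path decomposition of `G`: a sequence of bags covering all edges and vertices,
with each vertex appearing in a consecutive interval of bags. -/
structure PathDecomp (G : SimpleGraph V) where
  n : ℕ
  bag : Fin (n + 1) → Finset V
  cov_edge : ∀ ⦃u w : V⦄, G.Adj u w → ∃ i, u ∈ bag i ∧ w ∈ bag i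
  cov_vert : ∀ x : V, ∃ i, x ∈ bag i
  interval : ∀ (x : V) (i j k : Fin (n + 1)), i ≤ j → j ≤ k →
    x ∈ bag i → x ∈ bag k → x ∈ bag j

/-- The pathwidth of `G` is at most `w`. -/
def pwLE (G : SimpleGraph V) (w : ℕ) : Prop :=
  ∃ D : PathDecomp G, ∀ i, (D.bag i).card ≤ w + 1

/-- The rooted pathwidth of `G` at `x` is at most `r`: there is a path decomposition
of width `≤ r` whose last bag contains `x`. -/
def rpwLE (G : SimpleGraph V) (x : V) (r : ℕ) : Prop :=
  ∃ D : PathDecomp G, x ∈ D.bag (Fin.last D.n) ∧ ∀ i, (D.bag i).card ≤ r + 1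

/-- The rooted pathwidth of `G` at `x`. -/
noncomputable def rpw (G : SimpleGraph V) (x : V) : ℕ := sInf {r | rpwLE G x r}

/-- `G` has a cycle of length `n`. -/
def HasCycleLen (G : SimpleGraph V) (n : ℕ) : Prop :=
  ∃ (x : V) (c : G.Walk x x), c.IsCycle ∧ c.length = n

/-- The circumference of `G` equals `t` (it is `0` if `G` is acyclic). -/
def CircumEq (G : SimpleGraph V) (t : ℕ) : Prop :=
  (∀ n, HasCycleLen G n → n ≤ t) ∧ (t = 0 ∨ HasCycleLen G t)

/-- `G` is `k`-connected: it has more than `k` vertices and stays connected after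
deleting any set of fewer than `k` vertices. -/
def KConn (G : SimpleGraph V) (k : ℕ) : Prop :=
  k < Nat.card V ∧
  ∀ S : Set V, S.Finite → S.ncard < k → (G.induce Sᶜ).Connected

/-- `G` has `k` pairwise vertex-disjoint cycles, each of length at least `t`. -/
def HasKDisjointCyclesLen (G : SimpleGraph V) (k t : ℕ) : Prop :=
  ∃ c : Fin k → Σ x : V, G.Walk x x,
    (∀ m, (c m).2.IsCycle ∧ t ≤ (c m).2.length) ∧
    ∀ m m', m ≠ m' → List.Disjoint (c m).2.support (c m').2.support

/-- `H` is a minor of `G`, witnessed by branch sets `br`. -/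
def IsMinorWithBranch (G : SimpleGraph V) (H : SimpleGraph W) (br : W → Set V) : Prop :=
  (∀ w, (G.induce (br w)).Connected) ∧
  (∀ w w', w ≠ w' → Disjoint (br w) (br w')) ∧
  (∀ ⦃w w'⦄, H.Adj w w' → ∃ u ∈ br w, ∃ u' ∈ br w', G.Adj u u')

/-- `H` is a minor of `G`. -/
def HasMinor (G : SimpleGraph V) (H : SimpleGraph W) : Prop :=
  ∃ br : W → Set V, IsMinorWithBranch G H br



/-- A rooted forest on `V`, given by a parent function together with a consistent
height function (the height of a vertex is its distance to the root of its component). -/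
structure RootedForest (V : Type u) where
  parent : V → Option V
  height : V → ℕ
  height_root : ∀ x, parent x = none → height x = 0
  height_child : ∀ ⦃x y⦄, parent x = some y → height x = height y + 1

/-- `x` is an ancestor of `y` (possibly `x = y`). -/
def RootedForest.Ancestor (F : RootedForest V) (x y : V) : Prop :=
  Relation.ReflTransGen (fun a b => F.parent a = some b) y x

/-- `x` is a proper ancestor of `y`. -/
def RootedForest.ProperAncestor (F : RootedForest V) (x y : V) : Prop :=
  Relation.TransGen (fun a b => F.parent a = some b) y x

/-- The treedepth of `G` is at most `d`: there is a rooted forest of height at most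
`d - 1` on `V(G)` whose closure contains `G`. -/
def treedepthLE (G : SimpleGraph V) (d : ℕ) : Prop :=
  ∃ F : RootedForest V, (∀ x, F.height x + 1 ≤ d) ∧
    ∀ ⦃x y⦄, G.Adj x y → F.ProperAncestor x y ∨ F.ProperAncestor y x

/-- Vertices of the complete binary tree of height `h`: binary strings of length at
most `h`; the parent of a nonempty string is its tail, the root is the empty string. -/
abbrev CBTVert (h : ℕ) := {l : List Bool // l.length ≤ h}

/-- The complete binary tree of height `h` as a simple graph. -/
def CBT (h : ℕ) : SimpleGraph (CBTVert h) where
  Adj u w := (∃ b, u.val = b :: w.val) ∨ (∃ b, w.val = b :: u.val)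
  symm := ⟨by intro u w hv; tauto⟩
  loopless := by
    refine ⟨?_⟩
    rintro u (⟨b, hb⟩ | ⟨b, hb⟩) <;>
    · have := congrArg List.length hb
      simp at this

/-- The root of the complete binary tree. -/
def CBTroot (h : ℕ) : CBTVert h := ⟨[], by simp⟩

/-- The `m`-th leaf (in left-to-right order) of the complete binary tree of
height `h`: the binary string of length `h` whose bits are the binary digits of `m`,
most significant first. -/
def leafIdx (h : ℕ) (m : Fin (2 ^ h)) : CBTVert h :=
  ⟨(List.range h).map fun i => m.val.testBit (h - 1 - i), by simp⟩

/-- The graph obtained from `G` by adding `k` dominant vertices. -/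
def addDominant (G : SimpleGraph V) (k : ℕ) : SimpleGraph (V ⊕ Fin k) where
  Adj x y := (∃ a b, x = .inl a ∧ y = .inl b ∧ G.Adj a b) ∨
             (∃ a c, x = .inl a ∧ y = .inr c) ∨
             (∃ c a, x = .inr c ∧ y = .inl a) ∨
             (∃ c c', x = .inr c ∧ y = .inr c' ∧ c ≠ c')
  symm := by
    refine ⟨?_⟩
    rintro x y (⟨a,b,rfl,rfl,hab⟩|⟨a,c,rfl,rfl⟩|⟨c,a,rfl,rfl⟩|⟨c,c',rfl,rfl,hcc⟩)
    · exact Or.inl ⟨b,a,rfl,rfl,hab.symm⟩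
    · exact Or.inr (Or.inr (Or.inl ⟨c,a,rfl,rfl⟩))
    · exact Or.inr (Or.inl ⟨a,c,rfl,rfl⟩)
    · exact Or.inr (Or.inr (Or.inr ⟨c',c,rfl,rfl,hcc.symm⟩))
  loopless := by
    refine ⟨?_⟩
    rintro x (⟨a,b,rfl,h,hab⟩|⟨a,c,rfl,h⟩|⟨c,a,rfl,h⟩|⟨c,c',rfl,h,hcc⟩)
    · cases Sum.inl.inj h; exact G.irrefl hab
    · simp at h
    · simp at h
    · cases Sum.inr.inj h; exact hcc rfl

/-- The minimum size of a transversal of `G` (a set of vertices meeting all cycles). -/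
noncomputable def tau (G : SimpleGraph V) : ℕ :=
  sInf {n | ∃ S : Set V, S.ncard = n ∧ (G.induce Sᶜ).IsAcyclic}

/-- `x` is a cut-vertex of `G`. -/
def IsCutVertex (G : SimpleGraph V) (x : V) : Prop :=
  ∃ (u w : V) (hu : u ≠ x) (hw : w ≠ x),
    G.Reachable u w ∧ ¬ (G.induce {y | y ≠ x}).Reachable ⟨u, hu⟩ ⟨w, hw⟩

/-- A block of `G`: a maximal 2-connected subgraph, or a bridge edge,
or an isolated vertex. -/
def IsBlock (G : SimpleGraph V) (B : G.Subgraph) : Prop :=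
  (KConn B.coe 2 ∧ ∀ B' : G.Subgraph, B ≤ B' → KConn B'.coe 2 → B' = B) ∨
  (∃ (u w : V) (huw : G.Adj u w), G.IsBridge s(u, w) ∧ B = G.subgraphOfAdj huw) ∨
  (∃ x : V, (∀ u, ¬ G.Adj x u) ∧ B = G.singletonSubgraph x)

/-- The block-cut-forest of `G`: vertices are the cut-vertices and the blocks of `G`,
with a cut-vertex adjacent to exactly the blocks containing it. -/
def BCF (G : SimpleGraph V) :
    SimpleGraph ({x : V // IsCutVertex G x} ⊕ {B : G.Subgraph // IsBlock G B}) where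
  Adj x y := (∃ v B, x = .inl v ∧ y = .inr B ∧ v.val ∈ B.val.verts) ∨
             (∃ v B, x = .inr B ∧ y = .inl v ∧ v.val ∈ B.val.verts)
  symm := by
    refine ⟨?_⟩
    rintro x y (⟨v,B,rfl,rfl,hm⟩|⟨v,B,rfl,rfl,hm⟩)
    · exact Or.inr ⟨v,B,rfl,rfl,hm⟩
    · exact Or.inl ⟨v,B,rfl,rfl,hm⟩
  loopless := by
    refine ⟨?_⟩
    rintro x (⟨v,B,rfl,h,_⟩|⟨v,B,rfl,h,_⟩) <;> simp at h

/-- The octahedron `K_{2,2,2}` minus the edges of a triangle: parts are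
`{i} × {0,1}`; the deleted triangle consists of the vertices `(i, 0)`. -/
def Qgraph : SimpleGraph (Fin 3 × Fin 2) where
  Adj x y := x.1 ≠ y.1 ∧ ¬(x.2 = 0 ∧ y.2 = 0)
  symm := ⟨fun x y h => ⟨h.1.symm, fun hc => h.2 ⟨hc.2, hc.1⟩⟩⟩
  loopless := ⟨fun x h => h.1 rfl⟩

/-- The disjoint union of two triangles. -/
def TwoTriangles : SimpleGraph (Fin 3 ⊕ Fin 3) where
  Adj x y := (∃ a b, x = .inl a ∧ y = .inl b ∧ a ≠ b) ∨
             (∃ a b, x = .inr a ∧ y = .inr b ∧ a ≠ b)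
  symm := by
    refine ⟨?_⟩
    rintro x y (⟨a,b,rfl,rfl,hab⟩|⟨a,b,rfl,rfl,hab⟩)
    · exact Or.inl ⟨b,a,rfl,rfl,hab.symm⟩
    · exact Or.inr ⟨b,a,rfl,rfl,hab.symm⟩
  loopless := by
    refine ⟨?_⟩
    rintro x (⟨a,b,rfl,h,hab⟩|⟨a,b,rfl,h,hab⟩) <;>
    · first
      | (cases Sum.inl.inj h; exact hab rfl)
      | (cases Sum.inr.inj h; exact hab rfl)

/-- `A` contains a subdivision of `B` as a subgraph: branch vertices are given by an
injective map `f`, and each edge of `B` is replaced by a path in `A`; distinct edges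
give internally disjoint paths, and no branch vertex lies in the interior of a path. -/
def ContainsSubdivision (A : SimpleGraph V) (B : SimpleGraph W) : Prop :=
  ∃ (f : W → V) (P : ∀ ⦃u w : W⦄, B.Adj u w → A.Walk (f u) (f w)),
    Function.Injective f ∧
    (∀ ⦃u w : W⦄ (h : B.Adj u w), (P h).IsPath) ∧
    (∀ ⦃u w : W⦄ (h : B.Adj u w) (x : W), f x ∈ (P h).support → x = u ∨ x = w) ∧
    (∀ ⦃u w x y : W⦄ (h : B.Adj u w) (h' : B.Adj x y), s(u, w) ≠ s(x, y) →
      ∀ z, z ∈ (P h).support → z ∈ (P h').support →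
        z ∈ ({f u, f w} : Set V) ∩ {f x, f y})

/-!
`Q` is the triangle on the top vertices `(i, 1)` together with three pairwise non-adjacent bottom
vertices `(i, 0)`, each joined to the two top vertices `(j, 1)`, `j ≠ i`. Deleting two top
vertices leaves a star, while every single vertex misses one of the four triangles of `Q`.

In a minor model in `Q`, a branch set without a top vertex is connected and independent, hence a
single bottom vertex, so all but at most three branch sets are single vertices of degree two.
This already excludes `K₄`, and `K₃ ∪ K₃`, which has no independent set of size three. For
`K_{2,3}`, the two branch sets of the small side each contain a top vertex, so two branch sets of
the large side are bottom vertices; their neighbourhoods force every top vertex into the small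
side, after which every bottom vertex `(j, 0)` is a branch set of the large side. A branch set of
the small side containing `(j, 1)` must then also contain a neighbour of `(j, 0)`, so both contain
two top vertices, which is one too many.
-/

open Finset

namespace SimpleGraph

lemma IsAcyclic.not_adj_triangle {G : SimpleGraph V} (hG : G.IsAcyclic) {a b c : V}
    (hab : G.Adj a b) (hbc : G.Adj b c) (hca : G.Adj c a) : False := by
  classical
  exact hG.cliqueFree le_rfl {a, b, c} (is3Clique_triple_iff.mpr ⟨hab, hca.symm, hbc⟩)

lemma IsIndepSet.exists_eq_singleton_of_connected_induce {G : SimpleGraph V} {s : Set V}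
    (hs : G.IsIndepSet s) (hc : (G.induce s).Connected) : ∃ v, s = {v} := by
  have hbot : G.induce s = ⊥ :=
    le_bot_iff.mp fun x y hxy => hs x.2 y.2 (Subtype.coe_injective.ne hxy.ne) hxy
  obtain ⟨x⟩ := hc.nonempty
  refine ⟨x, Set.eq_singleton_iff_unique_mem.mpr ⟨x.2, fun y hy => ?_⟩⟩
  have hyx := hc.preconnected ⟨y, hy⟩ x
  rw [hbot, reachable_bot] at hyx
  exact congrArg Subtype.val hyx

end SimpleGraph

namespace IsMinorWithBranch

variable {G : SimpleGraph V} {H : SimpleGraph W} {br : W → Set V}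

lemma eq_of_mem (hbr : IsMinorWithBranch G H br) {w w' : W} {x : V} (hx : x ∈ br w)
    (hx' : x ∈ br w') : w = w' := by
  by_contra h
  exact Set.disjoint_left.mp (hbr.2.1 w w' h) hx hx'

lemma eq_of_eq_singleton (hbr : IsMinorWithBranch G H br) {w w' : W} {v : V}
    (hw : br w = {v}) (hw' : br w' = {v}) : w = w' :=
  hbr.eq_of_mem (x := v) (by simp [hw]) (by simp [hw'])

lemma exists_adj_of_eq_singleton (hbr : IsMinorWithBranch G H br) {w w' : W} {v : V}
    (hw : br w = {v}) (h : H.Adj w w') : ∃ u ∈ br w', G.Adj v u := by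
  obtain ⟨v', hv', u, hu, hvu⟩ := hbr.2.2 h
  rw [hw, Set.mem_singleton_iff] at hv'
  exact ⟨u, hu, hv' ▸ hvu⟩

lemma not_adj_of_eq_singleton (hbr : IsMinorWithBranch G H br) {w w' : W} {v v' : V}
    (hw : br w = {v}) (hw' : br w' = {v'}) (h : ¬ G.Adj v v') : ¬ H.Adj w w' := fun hA => by
  obtain ⟨u, hu, hvu⟩ := hbr.exists_adj_of_eq_singleton hw hA
  rw [hw', Set.mem_singleton_iff] at hu
  exact h (hu ▸ hvu)

lemma card_le_card_of_forall_exists_mem (hbr : IsMinorWithBranch G H br) {s : Finset W}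
    {T : Finset V} (hs : ∀ w ∈ s, ∃ x ∈ T, x ∈ br w) : #s ≤ #T := by
  refine card_le_card_of_forall_subsingleton (fun w x => x ∈ br w) hs fun x _ w hw w' hw' => ?_
  exact hbr.eq_of_mem hw.2 hw'.2

end IsMinorWithBranch

instance : DecidableRel TwoTriangles.Adj := fun x y =>
  inferInstanceAs (Decidable ((∃ a b, x = .inl a ∧ y = .inl b ∧ a ≠ b) ∨
    (∃ a b, x = .inr a ∧ y = .inr b ∧ a ≠ b)))

lemma TwoTriangles.adj_or_adj_or_adj {x y z : Fin 3 ⊕ Fin 3} (hxy : x ≠ y) (hxz : x ≠ z)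
    (hyz : y ≠ z) : TwoTriangles.Adj x y ∨ TwoTriangles.Adj x z ∨ TwoTriangles.Adj y z := by
  revert x y z
  decide

namespace Qgraph

instance : DecidableRel Qgraph.Adj := fun x y =>
  inferInstanceAs (Decidable (x.1 ≠ y.1 ∧ ¬(x.2 = 0 ∧ y.2 = 0)))

lemma adj_bottom_iff {a : Fin 3} {x : Fin 3 × Fin 2} :
    Qgraph.Adj (a, 0) x ↔ ∃ j ≠ a, x = (j, 1) := by
  revert a x
  decide

lemma not_adj_bottom_bottom (i j : Fin 3) : ¬ Qgraph.Adj (i, 0) (j, 0) :=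
  fun hA => hA.2 ⟨rfl, rfl⟩

lemma isIndepSet_bottom : Qgraph.IsIndepSet {x | x.2 = 0} :=
  fun _ hx _ hy _ hA => hA.2 ⟨hx, hy⟩

lemma card_neighborFinset_bottom (a : Fin 3) : #(Qgraph.neighborFinset (a, 0)) = 2 := by
  revert a
  decide

lemma exists_triangle_not_mem (v : Fin 3 × Fin 2) : ∃ a b c, Qgraph.Adj a b ∧ Qgraph.Adj b c ∧
    Qgraph.Adj c a ∧ a ≠ v ∧ b ≠ v ∧ c ≠ v := by
  revert v
  decide

lemma isAcyclic_induce_compl_tops :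
    (Qgraph.induce ({(0, 1), (1, 1)} : Set (Fin 3 × Fin 2))ᶜ).IsAcyclic := by
  have hc : ((2, 1) : Fin 3 × Fin 2) ∈ ({(0, 1), (1, 1)} : Set (Fin 3 × Fin 2))ᶜ := by
    simp
  refine (isAcyclic_starGraph ⟨(2, 1), hc⟩).anti fun ⟨x, hx⟩ ⟨y, hy⟩ hxy => ?_
  change Qgraph.Adj x y at hxy
  simp only [starGraph_adj, ne_eq, Subtype.mk.injEq]
  simp only [Set.mem_compl_iff, Set.mem_insert_iff, Set.mem_singleton_iff] at hx hy
  revert x y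
  decide

lemma tau_eq_two : tau Qgraph = 2 := by
  refine le_antisymm (Nat.sInf_le ⟨_, Set.ncard_pair (by decide), isAcyclic_induce_compl_tops⟩)
    (le_csInf ⟨_, _, Set.ncard_pair (by decide), isAcyclic_induce_compl_tops⟩ ?_)
  rintro n ⟨S, rfl, hS⟩
  by_contra! hS1
  obtain ⟨v, hv⟩ : ∃ v, S ⊆ {v} := by
    obtain rfl | ⟨v, rfl⟩ :=
      (Set.ncard_le_one_iff_subsingleton (s := S)).mp (by omega) |>.eq_empty_or_singleton
    · exact ⟨(0, 0), Set.empty_subset _⟩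
    · exact ⟨v, subset_rfl⟩
  obtain ⟨a, b, c, hab, hbc, hca, ha, hb, hc⟩ := exists_triangle_not_mem v
  have hSc {x} (hx : x ≠ v) : x ∈ Sᶜ := fun hxS => hx (hv hxS)
  exact hS.not_adj_triangle (a := ⟨a, hSc ha⟩) (b := ⟨b, hSc hb⟩) (c := ⟨c, hSc hc⟩) hab hbc hca

section MinorModel

variable {H : SimpleGraph W} {br : W → Set (Fin 3 × Fin 2)}

lemma eq_singleton_or_exists_top_mem (hbr : IsMinorWithBranch Qgraph H br) (w : W) :
    (∃ i, br w = {(i, 0)}) ∨ ∃ j, (j, 1) ∈ br w := by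
  by_cases htop : ∃ x ∈ br w, x.2 = 1
  · obtain ⟨⟨j, t⟩, hx, rfl⟩ := htop
    exact Or.inr ⟨j, hx⟩
  · push Not at htop
    have hsub : br w ⊆ {x | x.2 = 0} := fun x hx => by
      change x.2 = 0
      have := htop x hx
      omega
    have hindep : Qgraph.IsIndepSet (br w) := isIndepSet_bottom.mono hsub
    obtain ⟨⟨i, t⟩, hv⟩ := hindep.exists_eq_singleton_of_connected_induce (hbr.1 w)
    obtain rfl : t = 0 := hsub (hv.symm ▸ Set.mem_singleton (i, t))
    exact Or.inl ⟨i, hv⟩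

/-- The branch sets that are not single bottom vertices contain one of the three top vertices. -/
lemma exists_bottom_singletons [Fintype W] (hbr : IsMinorWithBranch Qgraph H br) :
    ∃ s : Finset W, Fintype.card W ≤ #s + 3 ∧ ∀ w ∈ s, ∃ i, br w = {(i, 0)} := by
  classical
  refine ⟨univ.filter fun w => ∃ i, br w = {(i, 0)}, ?_, fun w hw => (mem_filter.mp hw).2⟩
  rw [← card_univ, ← card_filter_add_card_filter_not (fun w => ∃ i, br w = {(i, 0)})]
  gcongr
  calc #(univ.filter fun w => ¬ ∃ i, br w = {(i, 0)})
      ≤ #(univ.image fun j : Fin 3 => (j, (1 : Fin 2))) := by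
        refine hbr.card_le_card_of_forall_exists_mem fun w hw => ?_
        obtain ⟨j, hj⟩ := (eq_singleton_or_exists_top_mem hbr w).resolve_left (mem_filter.mp hw).2
        exact ⟨_, mem_image_of_mem _ (mem_univ j), hj⟩
    _ ≤ 3 := card_image_le

lemma card_le_two_of_eq_singleton (hbr : IsMinorWithBranch Qgraph H br) {w : W} {a : Fin 3}
    (hw : br w = {(a, 0)}) {s : Finset W} (hs : ∀ w' ∈ s, H.Adj w w') : #s ≤ 2 :=
  card_neighborFinset_bottom a ▸ hbr.card_le_card_of_forall_exists_mem fun w' hw' => by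
    obtain ⟨u, hu, hau⟩ := hbr.exists_adj_of_eq_singleton hw (hs w' hw')
    exact ⟨u, (mem_neighborFinset _ _ _).mpr hau, hu⟩

lemma top_mem_union_of_eq_singleton (hbr : IsMinorWithBranch Qgraph H br) {w w₀ w₁ : W}
    {a m : Fin 3} (hw : br w = {(a, 0)}) (h₀ : H.Adj w w₀) (h₁ : H.Adj w w₁) (h₀₁ : w₀ ≠ w₁)
    (hm : m ≠ a) : (m, 1) ∈ br w₀ ∪ br w₁ := by
  obtain ⟨_, hu₀, hau₀⟩ := hbr.exists_adj_of_eq_singleton hw h₀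
  obtain ⟨_, hu₁, hau₁⟩ := hbr.exists_adj_of_eq_singleton hw h₁
  obtain ⟨j, hj, rfl⟩ := adj_bottom_iff.mp hau₀
  obtain ⟨k, hk, rfl⟩ := adj_bottom_iff.mp hau₁
  have hjk : j ≠ k := by
    rintro rfl
    exact h₀₁ (hbr.eq_of_mem hu₀ hu₁)
  obtain rfl | rfl : m = j ∨ m = k := by omega
  exacts [Or.inl hu₀, Or.inr hu₁]

end MinorModel

section CompleteBipartite

variable {br : Fin 2 ⊕ Fin 3 → Set (Fin 3 × Fin 2)}

lemma exists_top_mem_inl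
    (hbr : IsMinorWithBranch Qgraph (completeBipartiteGraph (Fin 2) (Fin 3)) br) (s : Fin 2) :
    ∃ j, (j, 1) ∈ br (.inl s) := by
  refine (eq_singleton_or_exists_top_mem hbr _).resolve_left fun ⟨a, ha⟩ => ?_
  have := card_le_two_of_eq_singleton hbr ha (s := {.inr 0, .inr 1, .inr 2}) (by simp)
  simp at this

lemma exists_inr_inr_eq_singleton
    (hbr : IsMinorWithBranch Qgraph (completeBipartiteGraph (Fin 2) (Fin 3)) br) :
    ∃ r₁ r₂ a b, a ≠ b ∧ br (.inr r₁) = {(a, 0)} ∧ br (.inr r₂) = {(b, 0)} := by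
  obtain ⟨s, hcard, hs⟩ := exists_bottom_singletons hbr
  simp only [Fintype.card_sum, Fintype.card_fin] at hcard
  obtain ⟨x, hx, y, hy, hxy⟩ := one_lt_card.mp (show 1 < #s by omega)
  have hinr : ∀ w ∈ s, ∃ r a, w = .inr r ∧ br (.inr r) = {(a, 0)} := by
    rintro (t | r) hw <;> obtain ⟨a, ha⟩ := hs _ hw
    · obtain ⟨j, hj⟩ := exists_top_mem_inl hbr t
      simp [ha] at hj
    · exact ⟨r, a, rfl, ha⟩
  obtain ⟨r₁, a, rfl, ha⟩ := hinr x hx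
  obtain ⟨r₂, b, rfl, hb⟩ := hinr y hy
  refine ⟨r₁, r₂, a, b, ?_, ha, hb⟩
  rintro rfl
  exact hxy (hbr.eq_of_eq_singleton ha hb)

lemma top_mem_inl (hbr : IsMinorWithBranch Qgraph (completeBipartiteGraph (Fin 2) (Fin 3)) br)
    (m : Fin 3) : (m, 1) ∈ br (.inl 0) ∪ br (.inl 1) := by
  obtain ⟨r₁, r₂, a, b, hab, ha, hb⟩ := exists_inr_inr_eq_singleton hbr
  have hK (s : Fin 2) (r : Fin 3) :
      (completeBipartiteGraph (Fin 2) (Fin 3)).Adj (.inr r) (.inl s) := by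
    simp
  by_cases hma : m = a
  · exact top_mem_union_of_eq_singleton hbr hb (hK 0 r₂) (hK 1 r₂) (by simp) (hma ▸ hab)
  · exact top_mem_union_of_eq_singleton hbr ha (hK 0 r₁) (hK 1 r₁) (by simp) hma

lemma exists_inr_eq_singleton
    (hbr : IsMinorWithBranch Qgraph (completeBipartiteGraph (Fin 2) (Fin 3)) br) (j : Fin 3) :
    ∃ r, br (.inr r) = {(j, 0)} := by
  obtain ⟨r₁, r₂, a, b, hab, ha, hb⟩ := exists_inr_inr_eq_singleton hbr
  obtain ⟨r₃, hr₁, hr₂⟩ : ∃ r₃, r₃ ≠ r₁ ∧ r₃ ≠ r₂ :=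
    (by decide : ∀ r₁ r₂ : Fin 3, ∃ r₃, r₃ ≠ r₁ ∧ r₃ ≠ r₂) r₁ r₂
  obtain ⟨c, hc⟩ : ∃ c, br (.inr r₃) = {(c, 0)} := by
    refine (eq_singleton_or_exists_top_mem hbr _).resolve_right fun ⟨m, hm⟩ => ?_
    obtain h | h := top_mem_inl hbr m <;> exact Sum.inl_ne_inr (hbr.eq_of_mem h hm)
  have hca : c ≠ a := by
    rintro rfl
    exact hr₁ (Sum.inr_injective (hbr.eq_of_eq_singleton hc ha))
  have hcb : c ≠ b := by
    rintro rfl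
    exact hr₂ (Sum.inr_injective (hbr.eq_of_eq_singleton hc hb))
  obtain rfl | rfl | rfl : j = a ∨ j = b ∨ j = c := by omega
  exacts [⟨r₁, ha⟩, ⟨r₂, hb⟩, ⟨r₃, hc⟩]

lemma exists_two_tops_mem_inl
    (hbr : IsMinorWithBranch Qgraph (completeBipartiteGraph (Fin 2) (Fin 3)) br) (s : Fin 2) :
    ∃ j k, j ≠ k ∧ (j, 1) ∈ br (.inl s) ∧ (k, 1) ∈ br (.inl s) := by
  obtain ⟨j, hj⟩ := exists_top_mem_inl hbr s
  obtain ⟨r, hr⟩ := exists_inr_eq_singleton hbr j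
  obtain ⟨_, hu, hju⟩ := hbr.exists_adj_of_eq_singleton hr
    (by simp : (completeBipartiteGraph (Fin 2) (Fin 3)).Adj (.inr r) (.inl s))
  obtain ⟨k, hkj, rfl⟩ := adj_bottom_iff.mp hju
  exact ⟨j, k, hkj.symm, hj, hu⟩

end CompleteBipartite

theorem not_hasMinor_completeGraph_four : ¬ HasMinor Qgraph (completeGraph (Fin 4)) := by
  rintro ⟨br, hbr⟩
  obtain ⟨s, hcard, hs⟩ := exists_bottom_singletons hbr
  simp only [Fintype.card_fin] at hcard
  obtain ⟨w, hw⟩ := card_pos.mp (show 0 < #s by omega)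
  obtain ⟨a, ha⟩ := hs w hw
  have := card_le_two_of_eq_singleton hbr ha (s := univ.erase w)
    fun w' hw' => (ne_of_mem_erase hw').symm
  simp at this

theorem not_hasMinor_twoTriangles : ¬ HasMinor Qgraph TwoTriangles := by
  rintro ⟨br, hbr⟩
  obtain ⟨s, hcard, hs⟩ := exists_bottom_singletons hbr
  simp only [Fintype.card_sum, Fintype.card_fin] at hcard
  obtain ⟨x, hx, y, hy, z, hz, hxy, hxz, hyz⟩ := two_lt_card.mp (show 2 < #s by omega)
  obtain ⟨⟨i, hi⟩, ⟨j, hj⟩, ⟨k, hk⟩⟩ := And.intro (hs x hx) (And.intro (hs y hy) (hs z hz))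
  rcases TwoTriangles.adj_or_adj_or_adj hxy hxz hyz with h | h | h
  · exact hbr.not_adj_of_eq_singleton hi hj (not_adj_bottom_bottom i j) h
  · exact hbr.not_adj_of_eq_singleton hi hk (not_adj_bottom_bottom i k) h
  · exact hbr.not_adj_of_eq_singleton hj hk (not_adj_bottom_bottom j k) h

theorem not_hasMinor_completeBipartiteGraph_two_three :
    ¬ HasMinor Qgraph (completeBipartiteGraph (Fin 2) (Fin 3)) := by
  rintro ⟨br, hbr⟩
  obtain ⟨j₀, k₀, hjk₀, hj₀, hk₀⟩ := exists_two_tops_mem_inl hbr 0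
  obtain ⟨j₁, k₁, hjk₁, hj₁, hk₁⟩ := exists_two_tops_mem_inl hbr 1
  have hne {m n : Fin 3} (hm : (m, 1) ∈ br (.inl 0)) (hn : (n, 1) ∈ br (.inl 1)) : m ≠ n := by
    rintro rfl
    exact absurd (hbr.eq_of_mem hm hn) (by simp)
  have := hne hj₀ hj₁
  have := hne hj₀ hk₁
  have := hne hk₀ hj₁
  have := hne hk₀ hk₁
  omega

end Qgraph

/-- The octahedron minus a triangle `Q` has transversal number 2
and contains none of `K₄`, `K_{2,3}`, `K₃ ∪ K₃` as a minor. -/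
theorem stmt18 :
    tau Qgraph = 2 ∧
    ¬ HasMinor Qgraph (completeGraph (Fin 4)) ∧
    ¬ HasMinor Qgraph (completeBipartiteGraph (Fin 2) (Fin 3)) ∧
    ¬ HasMinor Qgraph TwoTriangles :=
  ⟨Qgraph.tau_eq_two, Qgraph.not_hasMinor_completeGraph_four,
    Qgraph.not_hasMinor_completeBipartiteGraph_two_three,
    Qgraph.not_hasMinor_twoTriangles⟩
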